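/- arXiv:1810.13222 — 5 statements merged into one kernel-verified Lean document; each statement's English description precedes it below -/
import Mathlib

section
/- Let p be a prime and let G be a group. If H is a normal subgroup of G whose index in G is a power of p, and H is residually p-finite, then G is residually p-finite. -/
lemma auxCore (p : ℕ) (hp : p.Prime) {G : Type*} [Group G] (H : Subgroup G)
    [H.Normal] {n : ℕ} (hn : H.index = p ^ n)
    (Q : Type) [Group Q] [Fintype Q] (φ : H →* Q) (hQ : IsPGroup p Q)
    {g : G} (hgH : g ∈ H) (hφ : φ ⟨g, hgH⟩ ≠ 1) :
    ∃ N : Subgroup G, N.Normal ∧ (∃ m : ℕ, N.index = p ^ m) ∧ g ∉ N := by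
  haveI : Fact p.Prime := ⟨hp⟩
  haveI : H.FiniteIndex := ⟨by simp [hn, hp.pos.ne']⟩
  set K : Subgroup G := φ.ker.map H.subtype with hKdef
  have hKH : K ≤ H := by
    rintro a ⟨y, _, rfl⟩
    exact y.2
  have hKmem : ∀ (a : G) (ha : a ∈ H), a ∈ K ↔ (⟨a, ha⟩ : H) ∈ φ.ker := by
    intro a ha
    constructor
    · rintro ⟨y, hy, hy2⟩
      have : y = ⟨a, ha⟩ := Subtype.ext hy2
      rwa [this] at hy
    · intro h
      exact ⟨⟨a, ha⟩, h, rfl⟩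
  have hKconj : ∀ h ∈ H, ∀ k ∈ K, h * k * h⁻¹ ∈ K := by
    rintro h hh k ⟨y, hy, rfl⟩
    refine ⟨⟨h, hh⟩ * y * ⟨h, hh⟩⁻¹, (MonoidHom.normal_ker φ).conj_mem y hy ⟨h, hh⟩, rfl⟩
  set N : Subgroup G := K.normalCore with hNdef
  have mem_core : ∀ a : G, a ∈ N ↔ ∀ b : G, b * a * b⁻¹ ∈ K := fun a => Iff.rfl
  have hNK : N ≤ K := K.normalCore_le
  -- the big homomorphism
  have conj_mem : ∀ (h : H) (x : G ⧸ H), (x.out)⁻¹ * ↑h * x.out ∈ H := by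
    intro h x
    have := (inferInstance : H.Normal).conj_mem _ h.2 (x.out)⁻¹
    simpa using this
  set Ψ : H →* ((G ⧸ H) → Q) := MonoidHom.mk'
    (fun h => fun x => φ ⟨(x.out)⁻¹ * ↑h * x.out, conj_mem h x⟩)
    (by
      intro a b
      funext x
      show φ _ = φ _ * φ _
      rw [← map_mul]
      congr 1
      ext
      push_cast
      group) with hΨdef
  have hker : Ψ.ker = N.subgroupOf H := by
    ext h
    simp only [MonoidHom.mem_ker, hΨdef, MonoidHom.mk'_apply, funext_iff, Pi.one_apply,
      Subgroup.mem_subgroupOf, mem_core]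
    constructor
    · intro hz b
      obtain ⟨h', hh'⟩ := QuotientGroup.mk_out_eq_mul H b⁻¹
      have h1 : ((QuotientGroup.mk b⁻¹ : G ⧸ H).out)⁻¹ * ↑h * (QuotientGroup.mk b⁻¹ : G ⧸ H).out ∈ K := by
        rw [hKmem _ (conj_mem h _)]
        exact hz _
      rw [hh'] at h1
      have h2 : (↑h' : G) * ((b⁻¹ * ↑h')⁻¹ * ↑h * (b⁻¹ * ↑h')) * (↑h' : G)⁻¹ ∈ K :=
        hKconj _ h'.2 _ h1
      have : (↑h' : G) * ((b⁻¹ * ↑h')⁻¹ * ↑h * (b⁻¹ * ↑h')) * (↑h' : G)⁻¹ = b * ↑h * b⁻¹ := by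
        group
      rwa [this] at h2
    · intro hz x
      have h1 : (x.out)⁻¹ * ↑h * x.out ∈ K := by
        have := hz (x.out)⁻¹
        simpa using this
      rw [hKmem _ (conj_mem h x)] at h1
      exact h1
  -- index computation
  obtain ⟨k, hk⟩ := IsPGroup.iff_card.mp hQ
  have hrange : Nat.card (H ⧸ Ψ.ker) = Nat.card Ψ.range :=
    Nat.card_congr (QuotientGroup.quotientKerEquivRange Ψ).toEquiv
  have hdvd : Ψ.ker.index ∣ p ^ (k * Nat.card (G ⧸ H)) := by
    have h1 : Ψ.ker.index = Nat.card Ψ.range := hrange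
    rw [h1]
    have h2 : Nat.card Ψ.range ∣ Nat.card ((G ⧸ H) → Q) := Subgroup.card_subgroup_dvd_card _
    rwa [Nat.card_fun, hk, ← pow_mul] at h2
  obtain ⟨j, _, hj⟩ := (Nat.dvd_prime_pow hp).mp hdvd
  have hrel : N.relIndex H = p ^ j := by
    rw [Subgroup.relIndex, ← hker, hj]
  refine ⟨N, K.normalCore_normal, ⟨j + n, ?_⟩, ?_⟩
  · rw [← Subgroup.relIndex_mul_index (hNK.trans hKH), hrel, hn, pow_add]
  · intro hgN
    exact hφ ((hKmem g hgH).mp (hNK hgN))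

lemma auxPQuot (p : ℕ) (hp : p.Prime) {G : Type*} [Group G] (N : Subgroup G) [N.Normal]
    (h : ∃ m : ℕ, N.index = p ^ m) {g : G} (hg : g ∉ N) :
    ∃ (Q : Type) (_ : Group Q) (_ : Fintype Q) (φ : G →* Q), IsPGroup p Q ∧ φ g ≠ 1 := by
  obtain ⟨m, hm⟩ := h
  haveI : Fact p.Prime := ⟨hp⟩
  haveI : N.FiniteIndex := ⟨by simp [hm, hp.pos.ne']⟩
  obtain ⟨Q, gQ, fQ, ⟨e⟩⟩ := Finite.exists_type_univ_nonempty_mulEquiv.{_, 0} (G ⧸ N)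
  refine ⟨Q, gQ, fQ, e.toMonoidHom.comp (QuotientGroup.mk' N), ?_, ?_⟩
  · refine IsPGroup.of_equiv ?_ e
    rw [IsPGroup.iff_card]
    exact ⟨m, by rw [← hm]; rfl⟩
  · intro hcon
    have : ((g : G ⧸ N) : G ⧸ N) = 1 := by
      have := e.injective (a₁ := (QuotientGroup.mk' N) g) (a₂ := 1) (by simpa using hcon)
      simpa using this
    exact hg ((QuotientGroup.eq_one_iff g).mp this)

/-- A group `G` is residually `p`-finite if every non-trivial element is detected by a
homomorphism to a finite `p`-group. -/
def ResiduallyPFinite (p : ℕ) (G : Type*) [Group G] : Prop :=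
  ∀ g : G, g ≠ 1 → ∃ (Q : Type) (_ : Group Q) (_ : Fintype Q) (φ : G →* Q),
    IsPGroup p Q ∧ φ g ≠ 1

theorem stmt0 (p : ℕ) (hp : p.Prime) (G : Type*) [Group G] (H : Subgroup G)
    [H.Normal] (hindex : ∃ n : ℕ, H.index = p ^ n)
    (hH : ResiduallyPFinite p H) : ResiduallyPFinite p G := by
  obtain ⟨n, hn⟩ := hindex
  intro g hg
  by_cases hgH : g ∈ H
  · obtain ⟨Q, iG, iF, φ, hQ, hφ⟩ := hH ⟨g, hgH⟩ (by simp [Ne, Subtype.ext_iff]; exact hg)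
    obtain ⟨N, hNnorm, hNidx, hgN⟩ := @auxCore p hp G _ H _ n hn Q iG iF φ hQ g hgH hφ
    haveI := hNnorm
    exact auxPQuot p hp N hNidx hgN
  · exact auxPQuot p hp H ⟨n, hn⟩ hgH
end

section
/- Let p be a prime, G a group, and H a normal subgroup of G of index a power of p. If U is a normal subgroup of H of index a power of p in H, then the intersection V = ⋂_{g ∈ G} gUg⁻¹ is a normal subgroup of G, V ≤ U, and the index of V in G is a power of p. -/
/-!
The intersection is the normal core of `U`, so it is normal and contained in `U`. Inside `H` it
is the intersection of the conjugates `gUg⁻¹ ∩ H`; each is normal in `H` of index `[H : U]`, and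
since conjugation by `H` fixes them, there are at most `[G : H]` of them. For normal `A`,
`[K : A ∩ B]` divides `[K : A] [K : B]`, so a finite intersection of normal subgroups of `p`-power
index again has `p`-power index, and `[G : V] = [H : V] [G : H]`.
-/

namespace Subgroup

section PrimePowerIndex

variable {K : Type*} [Group K]

theorem index_inf_dvd_of_normal (A B : Subgroup K) [A.Normal] :
    (A ⊓ B).index ∣ A.index * B.index := by
  rw [← relIndex_mul_index (inf_le_right : A ⊓ B ≤ B), inf_relIndex_right]
  exact mul_dvd_mul_right (A.relIndex_dvd_index_of_normal B) _

theorem exists_index_sInf_eq_prime_pow {p : ℕ} (hp : p.Prime) {S : Set (Subgroup K)}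
    (hS : S.Finite) (h : ∀ N ∈ S, N.Normal ∧ ∃ n, N.index = p ^ n) :
    ∃ n, (sInf S).index = p ^ n := by
  induction S, hS using Set.Finite.induction_on with
  | empty => exact ⟨0, by simp⟩
  | @insert A S _ _ ih =>
    obtain ⟨hA, i, hi⟩ := h A (S.mem_insert A)
    obtain ⟨j, hj⟩ := ih fun N hN => h N (S.mem_insert_of_mem A hN)
    have hdvd : (A ⊓ sInf S).index ∣ p ^ (i + j) := by
      rw [pow_add, ← hi, ← hj]
      exact index_inf_dvd_of_normal A (sInf S)
    obtain ⟨n, -, hn⟩ := (Nat.dvd_prime_pow hp).mp hdvd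
    exact ⟨n, by rw [sInf_insert, hn]⟩

end PrimePowerIndex

section ConjugatesInNormalSubgroup

variable {G : Type*} [Group G] {H : Subgroup G} [H.Normal]

theorem comap_conjNormal_mul_of_mem (N : Subgroup H) [N.Normal] (g : G) {h : G} (hh : h ∈ H) :
    N.comap (MulAut.conjNormal (g * h)).toMonoidHom =
      N.comap (MulAut.conjNormal g).toMonoidHom := by
  ext x
  have hx : MulAut.conjNormal h x = ⟨h, hh⟩ * x * ⟨h, hh⟩⁻¹ :=
    Subtype.ext (MulAut.conjNormal_apply h x)
  simp only [mem_comap, MulEquiv.coe_toMonoidHom, map_mul, MulAut.mul_apply, hx, map_inv]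
  rw [Normal.mem_comm_iff inferInstance, inv_mul_cancel_left]

theorem finite_range_comap_conjNormal [H.FiniteIndex] (N : Subgroup H) [N.Normal] :
    (Set.range fun g : G => N.comap (MulAut.conjNormal g).toMonoidHom).Finite := by
  refine (Set.finite_range fun q : G ⧸ H =>
    N.comap (MulAut.conjNormal q.out).toMonoidHom).subset ?_
  rintro _ ⟨g, rfl⟩
  obtain ⟨⟨h, hh⟩, hout⟩ := QuotientGroup.mk_out_eq_mul H g
  exact ⟨g, by simp only [hout, comap_conjNormal_mul_of_mem N g hh]⟩

theorem normalCore_subgroupOf_eq_iInf (U : Subgroup G) :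
    U.normalCore.subgroupOf H =
      ⨅ g : G, (U.subgroupOf H).comap (MulAut.conjNormal g).toMonoidHom := by
  ext x
  simp only [mem_subgroupOf, mem_iInf, mem_comap, MulEquiv.coe_toMonoidHom,
    MulAut.conjNormal_apply]
  rfl

end ConjugatesInNormalSubgroup

end Subgroup

theorem stmt1 (p : ℕ) (hp : p.Prime) (G : Type*) [Group G] (H : Subgroup G)
    [H.Normal] (hHindex : ∃ n : ℕ, H.index = p ^ n)
    (U : Subgroup G) (hUH : U ≤ H)
    (hUnormal : ∀ h ∈ H, ∀ u ∈ U, h * u * h⁻¹ ∈ U)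
    (hUindex : ∃ m : ℕ, U.relIndex H = p ^ m) :
    (⨅ g : G, U.map (MulAut.conj g).toMonoidHom).Normal ∧
    (⨅ g : G, U.map (MulAut.conj g).toMonoidHom) ≤ U ∧
    ∃ m : ℕ, (⨅ g : G, U.map (MulAut.conj g).toMonoidHom).index = p ^ m := by
  have hcore : ⨅ g : G, U.map (MulAut.conj g).toMonoidHom = U.normalCore :=
    U.normalCore_eq_iInf_map_conj.symm
  rw [hcore]
  refine ⟨inferInstance, U.normalCore_le, ?_⟩
  obtain ⟨n, hn⟩ := hHindex
  have : H.FiniteIndex := ⟨hn ▸ pow_ne_zero n hp.ne_zero⟩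
  have : (U.subgroupOf H).Normal := ⟨fun x hx h => hUnormal h h.2 x hx⟩
  obtain ⟨k, hk⟩ : ∃ k, (U.normalCore.subgroupOf H).index = p ^ k := by
    rw [Subgroup.normalCore_subgroupOf_eq_iInf, ← sInf_range]
    refine Subgroup.exists_index_sInf_eq_prime_pow hp
      (Subgroup.finite_range_comap_conjNormal _) ?_
    rintro _ ⟨g, rfl⟩
    refine ⟨inferInstance, hUindex.imp fun m hm => ?_⟩
    exact (Subgroup.index_comap_of_surjective _ (MulEquiv.surjective _)).trans hm
  refine ⟨k + n, ?_⟩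
  rw [← Subgroup.relIndex_mul_index (U.normalCore_le.trans hUH), Subgroup.relIndex, hk, hn,
    pow_add]
end

section
/- For every prime p, every free group (on an arbitrary set of generators) is residually p-finite. -/
/-!
Let `L = x₀ x₁ ⋯ x_{n-1}` be the reduced word of `g ≠ 1`. On `R^{n+1}`, with basis
`e₀, …, eₙ` indexed by the positions of `L`, let `E_x` send `e_{i+1}` to `eᵢ` whenever
`xᵢ = x` and kill the other basis vectors. These matrices are strictly upper triangular, so
`a ↦ (1 + E_{a⁺})(1 + E_{a⁻})⁻¹` is a representation of the free group by unitriangular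
matrices, and over `ZMod p` these form a finite `p`-group. Because `L` is reduced, the letter
`(a, s)` at position `j` moves a vector `e_{j+1} + (higher terms)` to `e_j + (higher terms)`:
the factor `(1 + E_{(a,!s)})⁻¹` has no edge at `j` or `j + 1` to act through, and `E_{(a,s)}`
has one at `j`. Reading `L` from the right, its image therefore sends `eₙ` to `e₀ + ⋯ ≠ eₙ`.
-/

namespace Matrix

variable {R : Type*}

def IsStrictlyUpperTriangular {n : ℕ} [Zero R] (N : Matrix (Fin n) (Fin n) R) : Prop :=
  ∀ ⦃i j⦄, j ≤ i → N i j = 0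

theorem BlockTriangular.mulVec_apply_eq_zero {m : Type*} [Fintype m]
    [NonUnitalNonAssocSemiring R] {M : Matrix m m R} {b : m → Prop} (hM : M.BlockTriangular b)
    {x : m → R} (hx : ∀ k, b k → x k = 0) {i : m} (hi : b i) : (M *ᵥ x) i = 0 := by
  refine Finset.sum_eq_zero fun k _ => ?_
  show M i k * x k = 0
  by_cases hk : b k
  · rw [hx k hk, mul_zero]
  · rw [hM (lt_of_not_ge fun h => hk (h hi)), zero_mul]

section Semiring

variable {n : ℕ} [Semiring R] {A N N' : Matrix (Fin n) (Fin n) R}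

theorem IsStrictlyUpperTriangular.isUpperTriangular (hN : N.IsStrictlyUpperTriangular) :
    N.IsUpperTriangular :=
  fun _ _ h => hN h.le

theorem IsStrictlyUpperTriangular.add (hN : N.IsStrictlyUpperTriangular)
    (hN' : N'.IsStrictlyUpperTriangular) : (N + N').IsStrictlyUpperTriangular := fun _ _ h => by
  rw [Matrix.add_apply, hN h, hN' h, add_zero]

theorem IsUpperTriangular.mul_isStrictlyUpperTriangular (hA : A.IsUpperTriangular)
    (hN : N.IsStrictlyUpperTriangular) : (A * N).IsStrictlyUpperTriangular := fun i j hji => by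
  rw [mul_apply]
  refine Finset.sum_eq_zero fun k _ => ?_
  rcases lt_or_ge k i with hki | hik
  · rw [hA hki, zero_mul]
  · rw [hN (hji.trans hik), mul_zero]

theorem IsStrictlyUpperTriangular.pow_apply_eq_zero (hN : N.IsStrictlyUpperTriangular) :
    ∀ (t : ℕ) (i j : Fin n), (j : ℕ) < i + t → (N ^ t) i j = 0
  | 0, i, j, h => one_apply_ne (Fin.ne_of_val_ne (by omega))
  | t + 1, i, j, h => by
    rw [pow_succ', mul_apply]
    refine Finset.sum_eq_zero fun k _ => ?_
    rcases le_or_gt k i with hki | hik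
    · rw [hN hki, zero_mul]
    · rw [hN.pow_apply_eq_zero t k j (by omega), mul_zero]

theorem IsStrictlyUpperTriangular.pow_eq_zero (hN : N.IsStrictlyUpperTriangular) : N ^ n = 0 := by
  ext i j
  exact hN.pow_apply_eq_zero n i j (by omega)

theorem IsStrictlyUpperTriangular.isNilpotent (hN : N.IsStrictlyUpperTriangular) :
    IsNilpotent N :=
  ⟨n, hN.pow_eq_zero⟩

end Semiring

variable (R) in
def unitriangularGroup [CommRing R] (n : ℕ) : Subgroup (Matrix (Fin n) (Fin n) R)ˣ where
  carrier := {u | IsStrictlyUpperTriangular ((u : Matrix (Fin n) (Fin n) R) - 1)}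
  one_mem' := by simp [IsStrictlyUpperTriangular]
  mul_mem' {u v} hu hv := by
    have h : ((u * v : (Matrix (Fin n) (Fin n) R)ˣ) : Matrix (Fin n) (Fin n) R) - 1 =
        (u - 1) * (v - 1) + (u - 1) + (v - 1) := by
      rw [Units.val_mul]; noncomm_ring
    show IsStrictlyUpperTriangular _
    rw [h]
    exact (hu.isUpperTriangular.mul_isStrictlyUpperTriangular hv).add hu |>.add hv
  inv_mem' {u} hu := by
    let := u.invertible
    have hupper : (u : Matrix (Fin n) (Fin n) R).IsUpperTriangular := by
      simpa using hu.isUpperTriangular.add blockTriangular_one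
    have h : ((u⁻¹ : (Matrix (Fin n) (Fin n) R)ˣ) : Matrix (Fin n) (Fin n) R) - 1 =
        -((u⁻¹ : (Matrix (Fin n) (Fin n) R)ˣ) * (u - 1)) := by
      rw [mul_sub, Units.inv_mul, mul_one, neg_sub]
    show IsStrictlyUpperTriangular _
    rw [h]
    refine fun i j hji => ?_
    rw [neg_apply, neg_eq_zero]
    refine IsUpperTriangular.mul_isStrictlyUpperTriangular ?_ hu hji
    rw [coe_units_inv]
    exact blockTriangular_inv_of_blockTriangular hupper

theorem isPGroup_unitriangularGroup [CommRing R] (p : ℕ) [Fact p.Prime] [CharP R p] (n : ℕ)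
    [NeZero n] : IsPGroup p (unitriangularGroup R n) := by
  rintro ⟨u, hu⟩
  refine ⟨n, Subtype.ext <| Units.ext ?_⟩
  have hn : n ≤ p ^ n := (Nat.lt_pow_self (Fact.out : p.Prime).one_lt).le
  have h : (u : Matrix (Fin n) (Fin n) R) = 1 + (u - 1) := by abel
  simp only [SubmonoidClass.coe_pow, Units.val_pow_eq_pow_val, OneMemClass.coe_one, Units.val_one]
  rw [h, add_pow_char_pow_of_commute p n (Commute.one_left _), one_pow,
    pow_eq_zero_of_le hn (IsStrictlyUpperTriangular.pow_eq_zero hu), add_zero]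

end Matrix

def LeadingOneAt {R : Type*} [Zero R] [One R] {m : ℕ} (j : ℕ) (u : Fin m → R) : Prop :=
  (∀ i : Fin m, (i : ℕ) < j → u i = 0) ∧ ∀ i : Fin m, (i : ℕ) = j → u i = 1

namespace FreeGroup

open Matrix

theorem IsReduced.getElem?_succ_ne {α : Type*} {L : List (α × Bool)} (hL : IsReduced L)
    {k : ℕ} {x : α × Bool} (hx : L[k]? = some x) : L[k + 1]? ≠ some (x.1, !x.2) := by
  intro hy
  obtain ⟨hk, rfl⟩ := List.getElem?_eq_some_iff.1 hx
  obtain ⟨hk', hy⟩ := List.getElem?_eq_some_iff.1 hy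
  have := List.isChain_iff_getElem.1 hL k hk'
  simp [hy] at this

variable {α : Type*} [DecidableEq α] (R : Type*) (L : List (α × Bool))

def edgeMatrix [Zero R] [One R] (x : α × Bool) :
    Matrix (Fin (L.length + 1)) (Fin (L.length + 1)) R :=
  Matrix.of fun i j => if (j : ℕ) = i + 1 ∧ L[(i : ℕ)]? = some x then 1 else 0

variable {R L}

section Semiring

variable [Semiring R]

theorem edgeMatrix_mulVec_apply (x : α × Bool) (v : Fin (L.length + 1) → R)
    (i : Fin (L.length + 1)) :
    (edgeMatrix R L x *ᵥ v) i = if h : L[(i : ℕ)]? = some x then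
      v ⟨i + 1, Nat.succ_lt_succ (List.getElem?_eq_some_iff.1 h).1⟩ else 0 := by
  rw [mulVec, dotProduct]
  split_ifs with h
  · rw [Finset.sum_eq_single ⟨i + 1, Nat.succ_lt_succ (List.getElem?_eq_some_iff.1 h).1⟩]
    · simp [edgeMatrix, h]
    · intro j _ hj
      have : (j : ℕ) ≠ i + 1 := fun h' => hj (Fin.ext h')
      simp [edgeMatrix, this]
    · simp
  · exact Finset.sum_eq_zero fun j _ => by simp [edgeMatrix, h]

theorem isStrictlyUpperTriangular_edgeMatrix (x : α × Bool) :
    (edgeMatrix R L x).IsStrictlyUpperTriangular := by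
  intro i j hji
  simp only [edgeMatrix, of_apply, ite_eq_right_iff, and_imp]
  intro h
  have : (j : ℕ) ≤ i := hji
  omega

theorem blockTriangular_edgeMatrix {x : α × Bool} {k : ℕ} (hk : L[k]? ≠ some x) :
    (edgeMatrix R L x).BlockTriangular fun i => (i : ℕ) < k + 1 := by
  intro i j hji
  simp only [edgeMatrix, of_apply, ite_eq_right_iff, and_imp]
  intro h hi
  have hij : ¬((i : ℕ) < k + 1 → (j : ℕ) < k + 1) := hji.2
  exact (hk (by rwa [show (i : ℕ) = k by omega] at hi)).elim

end Semiring

section CommRing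

variable [CommRing R]

variable (R L) in
noncomputable def letterMatrix (x : α × Bool) :
    Matrix (Fin (L.length + 1)) (Fin (L.length + 1)) R :=
  (1 + edgeMatrix R L x) * (1 + edgeMatrix R L (x.1, !x.2))⁻¹

variable (R L) in
noncomputable def wordMatrix (l : List (α × Bool)) :
    Matrix (Fin (L.length + 1)) (Fin (L.length + 1)) R :=
  (l.map (letterMatrix R L)).prod

theorem leadingOneAt_letterMatrix_mulVec {j : ℕ} {x : α × Bool} (hx : L[j]? = some x)
    (hnext : L[j + 1]? ≠ some (x.1, !x.2)) {u : Fin (L.length + 1) → R}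
    (hu : LeadingOneAt (j + 1) u) : LeadingOneAt j (letterMatrix R L x *ᵥ u) := by
  set N := edgeMatrix R L (x.1, !x.2)
  let := (isStrictlyUpperTriangular_edgeMatrix (R := R) (L := L) (x.1, !x.2)).isNilpotent
    |>.isUnit_one_add.invertible
  set v := (1 + N)⁻¹ *ᵥ u
  have hxx : L[j]? ≠ some (x.1, !x.2) := by rw [hx]; cases x; simp
  have hv0 : ∀ i : Fin (L.length + 1), (i : ℕ) < j + 1 → v i = 0 := fun i hi =>
    (blockTriangular_inv_of_blockTriangular
      (blockTriangular_one.add (blockTriangular_edgeMatrix hxx))).mulVec_apply_eq_zero hu.1 hi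
  have hv1 : ∀ i : Fin (L.length + 1), (i : ℕ) = j + 1 → v i = 1 := by
    intro i hi
    have hNv : (N *ᵥ v) i = 0 := by rw [edgeMatrix_mulVec_apply, dif_neg (hi ▸ hnext)]
    have huv : (1 + N) *ᵥ v = u := by rw [mulVec_mulVec, mul_inv_of_invertible, one_mulVec]
    have := congrFun huv i
    rw [add_mulVec, one_mulVec, Pi.add_apply, hNv, add_zero] at this
    rw [this]
    exact hu.2 i hi
  have hw : letterMatrix R L x *ᵥ u = v + edgeMatrix R L x *ᵥ v := by
    rw [letterMatrix, ← mulVec_mulVec, add_mulVec, one_mulVec]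
  rw [hw]
  constructor
  · intro i hi
    rw [Pi.add_apply, hv0 i (by omega), zero_add, edgeMatrix_mulVec_apply]
    split_ifs
    · exact hv0 _ (by simp only; omega)
    · rfl
  · intro i hi
    rw [Pi.add_apply, hv0 i (by omega), edgeMatrix_mulVec_apply, dif_pos (hi ▸ hx), zero_add]
    exact hv1 _ (by simp [hi])

theorem leadingOneAt_wordMatrix_drop_mulVec (hL : IsReduced L) {j : ℕ} (hj : j ≤ L.length) :
    LeadingOneAt j (wordMatrix R L (L.drop j) *ᵥ Pi.single (Fin.last L.length) 1) := by
  induction hj using Nat.decreasingInduction with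
  | self =>
    rw [List.drop_length, wordMatrix, List.map_nil, List.prod_nil, one_mulVec]
    refine ⟨fun i hi => Pi.single_eq_of_ne (Fin.ne_of_lt hi) _, fun i hi => ?_⟩
    rw [Fin.ext (hi.trans (Fin.val_last _).symm), Pi.single_eq_same]
  | of_succ k hk ih =>
    rw [wordMatrix, List.drop_eq_getElem_cons hk, List.map_cons, List.prod_cons,
      ← mulVec_mulVec]
    have hx : L[k]? = some L[k] := List.getElem?_eq_getElem hk
    exact leadingOneAt_letterMatrix_mulVec hx (hL.getElem?_succ_ne hx) ih

variable (R L) in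
noncomputable def edgeUnit (x : α × Bool) :
    (Matrix (Fin (L.length + 1)) (Fin (L.length + 1)) R)ˣ :=
  (isStrictlyUpperTriangular_edgeMatrix x).isNilpotent.isUnit_one_add.unit

variable (R L) in
noncomputable def wordRep :
    FreeGroup α →* (Matrix (Fin (L.length + 1)) (Fin (L.length + 1)) R)ˣ :=
  FreeGroup.lift fun a => edgeUnit R L (a, true) * (edgeUnit R L (a, false))⁻¹

theorem coe_wordRep_mk (l : List (α × Bool)) :
    (wordRep R L (mk l) : Matrix _ _ R) = wordMatrix R L l := by
  rw [wordRep, lift_mk, ← Units.coeHom_apply, map_list_prod, List.map_map, wordMatrix]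
  congr 1
  refine List.map_congr_left fun ⟨a, s⟩ _ => ?_
  cases s <;> simp [letterMatrix, edgeUnit, coe_units_inv]

theorem wordRep_mem_unitriangularGroup (g : FreeGroup α) :
    wordRep R L g ∈ unitriangularGroup R (L.length + 1) := by
  have hedge (x : α × Bool) : edgeUnit R L x ∈ unitriangularGroup R (L.length + 1) := by
    show IsStrictlyUpperTriangular (_ - 1)
    rw [edgeUnit, IsUnit.unit_spec, add_sub_cancel_left]
    exact isStrictlyUpperTriangular_edgeMatrix x
  refine range_lift_le ?_ ⟨g, rfl⟩
  rintro _ ⟨a, rfl⟩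
  exact mul_mem (hedge _) (inv_mem (hedge _))

theorem wordRep_mk_ne_one [Nontrivial R] (hL : IsReduced L) (hne : L ≠ []) :
    wordRep R L (mk L) ≠ 1 := by
  intro h
  have h0 := (leadingOneAt_wordMatrix_drop_mulVec (R := R) hL (Nat.zero_le _)).2 0 rfl
  rw [List.drop_zero, ← coe_wordRep_mk, h, Units.val_one, one_mulVec,
    Pi.single_eq_of_ne (Fin.ne_of_val_ne (List.length_pos_iff.2 hne).ne)] at h0
  exact zero_ne_one h0

end CommRing

end FreeGroup

theorem stmt2 (p : ℕ) (hp : p.Prime) (α : Type*) :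
    ResiduallyPFinite p (FreeGroup α) := by
  classical
  have := Fact.mk hp
  intro g hg
  let L := g.toWord
  refine ⟨Matrix.unitriangularGroup (ZMod p) (L.length + 1), inferInstance, Fintype.ofFinite _,
    (FreeGroup.wordRep (ZMod p) L).codRestrict _ FreeGroup.wordRep_mem_unitriangularGroup,
    Matrix.isPGroup_unitriangularGroup p _, fun h => ?_⟩
  refine FreeGroup.wordRep_mk_ne_one (R := ZMod p) FreeGroup.isReduced_toWord
    (mt FreeGroup.toWord_eq_nil_iff.1 hg) ?_
  rw [FreeGroup.mk_toWord]
  simpa [Subtype.ext_iff] using h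
end

section
/- Let p be a prime, let A₁ and A₂ be finite p-groups, let B be a group, and let f₁ : B → A₁ and f₂ : B → A₂ be injective group homomorphisms. If the amalgamated free product G = A₁ *_B A₂ (the pushout of f₁ and f₂) is residually p-finite, then there exist chief series (A₁^{(k)})_{k≥0} of A₁ and (A₂^{(k)})_{k≥0} of A₂ such that f₁⁻¹(A₁^{(k)}) = f₂⁻¹(A₂^{(k)}) for all k. -/
/-- `S` is a chief series of the finite `p`-group `P`: a descending sequence of normal
subgroups of `P` starting at `P`, with successive quotients trivial or of order `p`,
terminating at the trivial subgroup. -/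
def IsChiefSeries (p : ℕ) {P : Type*} [Group P] (S : ℕ → Subgroup P) : Prop :=
  S 0 = ⊤ ∧ (∀ k, S (k + 1) ≤ S k) ∧ (∀ k, (S k).Normal) ∧
    (∀ k, (S (k + 1)).relIndex (S k) = 1 ∨ (S (k + 1)).relIndex (S k) = p) ∧
    ∃ n, S n = ⊥


/-!
The factors embed in the pushout, as they do in Mathlib's amalgamated product
`Monoid.PushoutI`. Residual `p`-finiteness separates the finitely many nontrivial elements of
`j₁(A₁) ∪ j₂(A₂)` in one finite `p`-group `Q` (a product of separating quotients), so some
`φ : G →* Q` is injective on both factors. A chief series of `Q`, which exists because a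
nontrivial `p`-group has a central subgroup of order `p`, pulls back along `φ ∘ j₁` and
`φ ∘ j₂` to chief series of `A₁` and `A₂` (indices only drop to divisors of `p`), and the two
pullbacks agree on `B` because `φ ∘ j₁ ∘ f₁ = φ ∘ j₂ ∘ f₂`.
-/

open Function

namespace Subgroup

variable {G : Type*} [Group G]

theorem normal_of_le_center {H : Subgroup G} (h : H ≤ center G) : H.Normal :=
  ⟨fun n hn g => by rwa [mem_center_iff.mp (h hn) g, mul_inv_cancel_right]⟩

theorem relIndex_dvd_of_le_right {H K L : Subgroup G} [H.Normal] (hKL : K ≤ L) :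
    H.relIndex K ∣ H.relIndex L := by
  rw [← relIndex_sup_right K H, ← relIndex_sup_right L H]
  exact Dvd.intro _ (relIndex_mul_relIndex H _ _ le_sup_right (sup_le_sup_right hKL H))

end Subgroup

namespace IsPGroup

variable {p : ℕ} {P : Type*} [Group P]

theorem pi {ι : Type*} [Finite ι] {Q : ι → Type*} [∀ i, Group (Q i)]
    (hQ : ∀ i, IsPGroup p (Q i)) : IsPGroup p (∀ i, Q i) := by
  cases nonempty_fintype ι
  intro g
  choose k hk using fun i => hQ i (g i)
  refine ⟨Finset.univ.sup k, funext fun i => ?_⟩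
  obtain ⟨c, hc⟩ :=
    pow_dvd_pow p (Finset.le_sup (Finset.mem_univ i) : k i ≤ Finset.univ.sup k)
  rw [Pi.pow_apply, hc, pow_mul, hk i, one_pow, Pi.one_apply]

theorem exists_normal_card_eq_prime [Fact p.Prime] [Finite P] [Nontrivial P]
    (hP : IsPGroup p P) : ∃ N : Subgroup P, N.Normal ∧ Nat.card N = p := by
  have := hP.center_nontrivial
  have hdvd : p ∣ Nat.card (Subgroup.center P) :=
    ((hP.to_subgroup _).card_eq_or_dvd).resolve_left Finite.one_lt_card.ne'
  obtain ⟨z, hz⟩ := exists_prime_orderOf_dvd_card' p hdvd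
  refine ⟨Subgroup.zpowers (z : P),
    Subgroup.normal_of_le_center (Subgroup.zpowers_le.mpr z.2), ?_⟩
  rw [Nat.card_zpowers, Subgroup.orderOf_coe, hz]

end IsPGroup

namespace IsChiefSeries

variable {p : ℕ} {P : Type*} [Group P]

theorem comap {A : Type*} [Group A] (hp : p.Prime) {S : ℕ → Subgroup P}
    (hS : IsChiefSeries p S) {f : A →* P} (hf : Injective f) :
    IsChiefSeries p fun k => (S k).comap f := by
  obtain ⟨h0, hanti, hnorm, hidx, n, hn⟩ := hS
  refine ⟨by simp only [h0, Subgroup.comap_top], fun k => Subgroup.comap_mono (hanti k),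
    fun k => (hnorm k).comap f, fun k => ?_, n, ?_⟩
  · have := hnorm (k + 1)
    rw [← Nat.dvd_prime hp, Subgroup.relIndex_comap]
    exact (Subgroup.relIndex_dvd_of_le_right (Subgroup.map_comap_le f (S k))).trans
      ((Nat.dvd_prime hp).mpr (hidx k))
  · simp only [hn, MonoidHom.comap_bot, (MonoidHom.ker_eq_bot_iff f).mpr hf]

theorem exists_of_quotient {N : Subgroup P} [N.Normal] (hN : Nat.card N = p)
    {T : ℕ → Subgroup (P ⧸ N)} (hT : IsChiefSeries p T) :
    ∃ S : ℕ → Subgroup P, IsChiefSeries p S := by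
  obtain ⟨h0, hanti, hnorm, hidx, n, hn⟩ := hT
  -- after the pullback of `T` comes one extra step `N > ⊥`, of index `|N| = p`
  refine ⟨fun k => if k ≤ n then (T k).comap (QuotientGroup.mk' N) else ⊥, ?_, fun k => ?_,
    fun k => ?_, fun k => ?_, n + 1, if_neg (by omega)⟩
  · simp only [if_pos n.zero_le, h0, Subgroup.comap_top]
  · dsimp only
    split_ifs with h1 h2
    exacts [Subgroup.comap_mono (hanti k), absurd (by omega) h2, bot_le, le_rfl]
  · dsimp only
    split_ifs
    exacts [(hnorm k).comap _, Subgroup.normal_bot]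
  · dsimp only
    split_ifs with h1 h2
    · rw [Subgroup.relIndex_comap, Subgroup.map_comap_eq_self_of_surjective
        (QuotientGroup.mk'_surjective N)]
      exact hidx k
    · omega
    · rw [show k = n by omega, hn, MonoidHom.comap_bot, QuotientGroup.ker_mk',
        Subgroup.relIndex_bot_left, hN]
      exact .inr rfl
    · exact .inl (Subgroup.relIndex_self _)

end IsChiefSeries

theorem IsPGroup.exists_isChiefSeries {p : ℕ} {P : Type*} [Group P] [Fact p.Prime] [Finite P]
    (hP : IsPGroup p P) : ∃ S : ℕ → Subgroup P, IsChiefSeries p S := by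
  induction hcard : Nat.card P using Nat.strong_induction_on generalizing P with
  | _ n ih =>
    rcases subsingleton_or_nontrivial P with _ | _
    · exact ⟨fun _ => ⊥, Subsingleton.elim _ _, fun _ => le_rfl, fun _ => inferInstance,
        fun _ => .inl (Subgroup.relIndex_self _), 0, rfl⟩
    · obtain ⟨N, _, hNp⟩ := hP.exists_normal_card_eq_prime
      have hlt : Nat.card (P ⧸ N) < n := by
        have := (Fact.out : p.Prime).one_lt
        rw [← hcard, N.card_eq_card_quotient_mul_card_subgroup, hNp]
        exact lt_mul_of_one_lt_right Nat.card_pos this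
      obtain ⟨T, hT⟩ := ih _ hlt (hP.to_quotient N) rfl
      exact hT.exists_of_quotient hNp

theorem ResiduallyPFinite.exists_map_ne_one {p : ℕ} {G : Type} [Group G]
    (hG : ResiduallyPFinite p G) (s : Set G) [Finite s] :
    ∃ (Q : Type) (_ : Group Q) (_ : Finite Q) (φ : G →* Q),
      IsPGroup p Q ∧ ∀ g ∈ s, g ≠ 1 → φ g ≠ 1 := by
  choose Q _ _ φ hQ hφ using fun g : {g : s // (g : G) ≠ 1} => hG g g.2
  exact ⟨∀ g, Q g, inferInstance, inferInstance, MonoidHom.pi φ, IsPGroup.pi hQ,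
    fun g hg hg1 h => hφ ⟨⟨g, hg⟩, hg1⟩ (congr_fun h ⟨⟨g, hg⟩, hg1⟩)⟩

theorem injective_of_pushout {A₁ A₂ B G : Type} [Group A₁] [Group A₂] [Group B] [Group G]
    {f₁ : B →* A₁} {f₂ : B →* A₂} (hf₁ : Injective f₁) (hf₂ : Injective f₂)
    {j₁ : A₁ →* G} {j₂ : A₂ →* G}
    (hlift : ∀ (K : Type) [Group K] (k₁ : A₁ →* K) (k₂ : A₂ →* K),
      k₁.comp f₁ = k₂.comp f₂ → ∃ φ : G →* K, φ.comp j₁ = k₁ ∧ φ.comp j₂ = k₂) :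
    Injective j₁ ∧ Injective j₂ := by
  -- `G` maps compatibly to the `Bool`-indexed amalgamated product, where the factors embed
  let A : Bool → Type := fun b => cond b A₁ A₂
  let _ : ∀ b, Group (A b) := fun | true => ‹Group A₁› | false => ‹Group A₂›
  let f : ∀ b, B →* A b := fun | true => f₁ | false => f₂
  have hf : ∀ b, Injective (f b) := fun | true => hf₁ | false => hf₂
  obtain ⟨φ, hφ₁, hφ₂⟩ := hlift _ (Monoid.PushoutI.of (φ := f) true)
    (Monoid.PushoutI.of (φ := f) false)
    ((Monoid.PushoutI.of_comp_eq_base (φ := f) true).trans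
      (Monoid.PushoutI.of_comp_eq_base (φ := f) false).symm)
  have h₁ : Injective (φ ∘ j₁) := by
    rw [← MonoidHom.coe_comp, hφ₁]; exact Monoid.PushoutI.of_injective hf true
  have h₂ : Injective (φ ∘ j₂) := by
    rw [← MonoidHom.coe_comp, hφ₂]; exact Monoid.PushoutI.of_injective hf false
  exact ⟨h₁.of_comp, h₂.of_comp⟩

theorem MonoidHom.injective_comp_of_map_ne_one {A G Q : Type*} [Group A] [Group G] [Group Q]
    {j : A →* G} (hj : Injective j) {φ : G →* Q} (hφ : ∀ a, j a ≠ 1 → φ (j a) ≠ 1) :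
    Injective (φ.comp j) :=
  (injective_iff_map_eq_one _).2 fun a ha =>
    by_contra fun h => hφ a ((map_ne_one_iff j hj).2 h) ha

theorem stmt5_general (p : ℕ) (hp : p.Prime)
    (A₁ A₂ B : Type) [Group A₁] [Group A₂] [Group B] [Finite A₁] [Finite A₂]
    (f₁ : B →* A₁) (f₂ : B →* A₂)
    (hf₁ : Function.Injective f₁) (hf₂ : Function.Injective f₂)
    -- `G`, together with `j₁, j₂`, is the pushout of `f₁` and `f₂` in the category
    -- of groups, i.e. the amalgamated free product `A₁ *_B A₂`
    (G : Type) [Group G] (j₁ : A₁ →* G) (j₂ : A₂ →* G)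
    (hcomm : j₁.comp f₁ = j₂.comp f₂)
    (huniv : ∀ (K : Type) [Group K] (k₁ : A₁ →* K) (k₂ : A₂ →* K),
      k₁.comp f₁ = k₂.comp f₂ →
        ∃! φ : G →* K, φ.comp j₁ = k₁ ∧ φ.comp j₂ = k₂)
    (hG : ResiduallyPFinite p G) :
    ∃ (S₁ : ℕ → Subgroup A₁) (S₂ : ℕ → Subgroup A₂),
      IsChiefSeries p S₁ ∧ IsChiefSeries p S₂ ∧
        ∀ k, (S₁ k).comap f₁ = (S₂ k).comap f₂ := by
  have := Fact.mk hp
  obtain ⟨hj₁, hj₂⟩ :=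
    injective_of_pushout hf₁ hf₂ fun K _ k₁ k₂ h => (huniv K k₁ k₂ h).exists
  obtain ⟨Q, _, _, φ, hQ, hφ⟩ := hG.exists_map_ne_one (Set.range j₁ ∪ Set.range j₂)
  have hφ₁ := MonoidHom.injective_comp_of_map_ne_one hj₁ fun a => hφ _ (.inl ⟨a, rfl⟩)
  have hφ₂ := MonoidHom.injective_comp_of_map_ne_one hj₂ fun a => hφ _ (.inr ⟨a, rfl⟩)
  obtain ⟨T, hT⟩ := hQ.exists_isChiefSeries
  refine ⟨_, _, hT.comap hp hφ₁, hT.comap hp hφ₂, fun k => ?_⟩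
  simp only [Subgroup.comap_comap, MonoidHom.comp_assoc, hcomm]

theorem stmt5 (p : ℕ) (hp : p.Prime)
    (A₁ A₂ B : Type) [Group A₁] [Group A₂] [Group B] [Finite A₁] [Finite A₂]
    (hA₁ : IsPGroup p A₁) (hA₂ : IsPGroup p A₂)
    (f₁ : B →* A₁) (f₂ : B →* A₂)
    (hf₁ : Function.Injective f₁) (hf₂ : Function.Injective f₂)
    -- `G`, together with `j₁, j₂`, is the pushout of `f₁` and `f₂` in the category
    -- of groups, i.e. the amalgamated free product `A₁ *_B A₂`
    (G : Type) [Group G] (j₁ : A₁ →* G) (j₂ : A₂ →* G)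
    (hcomm : j₁.comp f₁ = j₂.comp f₂)
    (huniv : ∀ (K : Type) [Group K] (k₁ : A₁ →* K) (k₂ : A₂ →* K),
      k₁.comp f₁ = k₂.comp f₂ →
        ∃! φ : G →* K, φ.comp j₁ = k₁ ∧ φ.comp j₂ = k₂)
    (hG : ResiduallyPFinite p G) :
    ∃ (S₁ : ℕ → Subgroup A₁) (S₂ : ℕ → Subgroup A₂),
      IsChiefSeries p S₁ ∧ IsChiefSeries p S₂ ∧
        ∀ k, (S₁ k).comap f₁ = (S₂ k).comap f₂ :=
  stmt5_general p hp A₁ A₂ B f₁ f₂ hf₁ hf₂ G j₁ j₂ hcomm huniv hG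
end

section
/- Let p be a prime and let G be a group possessing a normal subgroup H such that H is a free group and the index [G : H] is a power of p. Then G is residually p-finite. -/
theorem Nat.Prime.pow_dvd_choose_pow_add {p : ℕ} (hp : p.Prime) (m : ℕ) {s i : ℕ} (hi : i ≠ 0)
    (his : i < s) : p ^ m ∣ (p ^ (m + s)).choose i := by
  have hle : i ≤ p ^ (m + s) :=
    his.le.trans ((Nat.lt_pow_self hp.one_lt).le.trans (Nat.pow_le_pow_right hp.pos (by omega)))
  rw [hp.pow_dvd_iff_le_factorization (Nat.choose_pos hle).ne',
    Nat.factorization_choose_prime_pow hp hle hi]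
  have := Nat.factorization_lt p hi
  omega

theorem one_add_pow_prime_pow_eq_one {A : Type*} [Ring A] {p m s : ℕ} (hp : p.Prime)
    (hchar : ((p ^ m : ℕ) : A) = 0) {N : A} (hN : N ^ s = 0) : (1 + N) ^ p ^ (m + s) = 1 := by
  rw [add_comm, (Commute.one_right N).add_pow, Finset.sum_eq_single 0]
  · simp
  · intro i _ hi
    rcases lt_or_ge i s with his | hsi
    · obtain ⟨c, hc⟩ := hp.pow_dvd_choose_pow_add m hi his
      rw [hc, Nat.cast_mul, hchar, zero_mul, mul_zero]
    · rw [pow_eq_zero_of_le hsi hN, zero_mul, zero_mul]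
  · simp

namespace Matrix

variable {R : Type*} {n : ℕ}

/-- For `r = 1` this is strict upper triangularity. -/
def VanishesBelowSuperdiag [Zero R] (r : ℕ) (M : Matrix (Fin n) (Fin n) R) : Prop :=
  ∀ i j : Fin n, (j : ℕ) < i + r → M i j = 0

namespace VanishesBelowSuperdiag

variable [Semiring R] {r r' : ℕ} {A B : Matrix (Fin n) (Fin n) R}

theorem mono (hA : VanishesBelowSuperdiag r A) (hr : r' ≤ r) : VanishesBelowSuperdiag r' A :=
  fun i j hij => hA i j (by omega)

theorem add (hA : VanishesBelowSuperdiag r A) (hB : VanishesBelowSuperdiag r B) :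
    VanishesBelowSuperdiag r (A + B) := fun i j hij => by
  rw [add_apply, hA i j hij, hB i j hij, add_zero]

theorem mul (hA : VanishesBelowSuperdiag r A) (hB : VanishesBelowSuperdiag r' B) :
    VanishesBelowSuperdiag (r + r') (A * B) := fun i j hij => by
  rw [mul_apply]
  refine Finset.sum_eq_zero fun t _ => ?_
  rcases lt_or_ge (t : ℕ) (i + r) with h | h
  · rw [hA i t h, zero_mul]
  · rw [hB t j (by omega), mul_zero]

theorem one : VanishesBelowSuperdiag 0 (1 : Matrix (Fin n) (Fin n) R) :=
  fun _ _ hij => one_apply_ne (by rintro rfl; omega)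

theorem smul (hA : VanishesBelowSuperdiag r A) (c : R) : VanishesBelowSuperdiag r (c • A) :=
  fun i j hij => by rw [smul_apply, hA i j hij, smul_zero]

theorem pow (hA : VanishesBelowSuperdiag r A) (k : ℕ) : VanishesBelowSuperdiag (r * k) (A ^ k) := by
  induction k with
  | zero => simpa using one
  | succ k ih => rw [pow_succ, Nat.mul_succ]; exact ih.mul hA

theorem pow_eq_zero (hA : VanishesBelowSuperdiag 1 A) : A ^ n = 0 :=
  ext fun i j => hA.pow n i j (by omega)

end VanishesBelowSuperdiag

def unitriangular (n : ℕ) (R : Type*) [Ring R] : Submonoid (Matrix (Fin n) (Fin n) R) where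
  carrier := {M | VanishesBelowSuperdiag 1 (M - 1)}
  one_mem' := by simp only [Set.mem_ofPred_eq, sub_self]; exact fun _ _ _ => rfl
  mul_mem' {M N} hM hN := by
    have h : M * N - 1 = (M - 1) + (N - 1) + (M - 1) * (N - 1) := by noncomm_ring
    simp only [Set.mem_ofPred_eq, h]
    exact (hM.add hN).add ((hM.mul hN).mono (by omega))

theorem mem_unitriangular [Ring R] {M : Matrix (Fin n) (Fin n) R} :
    M ∈ unitriangular n R ↔ VanishesBelowSuperdiag 1 (M - 1) :=
  Iff.rfl

theorem pow_prime_pow_eq_one_of_mem_unitriangular [Ring R] {p m : ℕ} (hp : p.Prime)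
    (hchar : ((p ^ m : ℕ) : R) = 0) {M : Matrix (Fin n) (Fin n) R} (hM : M ∈ unitriangular n R) :
    M ^ p ^ (m + n) = 1 := by
  have hchar' : ((p ^ m : ℕ) : Matrix (Fin n) (Fin n) R) = 0 := by
    rw [← diagonal_natCast, hchar, diagonal_zero]
  simpa using one_add_pow_prime_pow_eq_one hp hchar' (mem_unitriangular.mp hM).pow_eq_zero

variable [CommSemiring R]

theorem prod_map_range_apply_zero_eq_zero (M : ℕ → Matrix (Fin (n + 1)) (Fin (n + 1)) R)
    (hM : ∀ t (i j : Fin (n + 1)), (i : ℕ) + 1 < j → M t i j = 0) (k : ℕ) (j : Fin (n + 1))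
    (hj : k < j) : ((List.range k).map M).prod 0 j = 0 := by
  induction k generalizing j with
  | zero => exact one_apply_ne (by rintro rfl; simp at hj)
  | succ k ih =>
    rw [List.range_succ, List.map_append, List.prod_append, List.map_singleton,
      List.prod_singleton, mul_apply]
    refine Finset.sum_eq_zero fun t _ => ?_
    rcases lt_or_ge k t with h | h
    · rw [ih t h, zero_mul]
    · rw [hM k t j (by omega), mul_zero]

theorem prod_map_range_apply_zero (M : ℕ → Matrix (Fin (n + 1)) (Fin (n + 1)) R) (c : ℕ → R)
    (hM : ∀ t (i j : Fin (n + 1)), (i : ℕ) + 1 < j → M t i j = 0)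
    (hc : ∀ t (i j : Fin (n + 1)), (i : ℕ) = t → (j : ℕ) = t + 1 → M t i j = c t)
    (j : Fin (n + 1)) : ((List.range j).map M).prod 0 j = ∏ t ∈ Finset.range j, c t := by
  obtain ⟨k, hk⟩ := j
  induction k with
  | zero => simp
  | succ k ih =>
    rw [List.range_succ, List.map_append, List.prod_append, List.map_singleton,
      List.prod_singleton, mul_apply, Finset.prod_range_succ, ← ih (by omega),
      Finset.sum_eq_single ⟨k, by omega⟩, hc k _ _ rfl rfl]
    · intro t _ htk
      rcases lt_or_ge k t with h | h
      · rw [prod_map_range_apply_zero_eq_zero M hM k t h, zero_mul]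
      · have : (t : ℕ) ≠ k := Fin.val_ne_iff.mpr htk
        rw [hM k t _ (by dsimp only; omega), mul_zero]
    · simp

end Matrix

namespace FreeGroup

variable {α : Type*}

def syllableProd (S : List (α × ℤ)) : FreeGroup α :=
  (S.map fun a => of a.1 ^ a.2).prod

/-- `S` lists the syllables `x ^ e` of a reduced word. -/
def IsReducedSyllables (S : List (α × ℤ)) : Prop :=
  (∀ a ∈ S, a.2 ≠ 0) ∧ S.IsChain fun a b => a.1 ≠ b.1

theorem IsReducedSyllables.exists_zpow_mul [DecidableEq α] {S : List (α × ℤ)}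
    (hS : IsReducedSyllables S) (x : α) (e : ℤ) :
    ∃ T, IsReducedSyllables T ∧ syllableProd T = of x ^ e * syllableProd S := by
  obtain ⟨hexp, hchain⟩ := hS
  by_cases he : e = 0
  · exact ⟨S, ⟨hexp, hchain⟩, by rw [he, zpow_zero, one_mul]⟩
  match S, hexp, hchain with
  | [], _, _ => exact ⟨[(x, e)], ⟨by simpa using he, .singleton _⟩, by simp [syllableProd]⟩
  | (y, f) :: S, hexp, hchain =>
    by_cases hxy : x = y
    · subst hxy
      have hprod : of x ^ e * syllableProd ((x, f) :: S) = of x ^ (e + f) * syllableProd S := by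
        simp [syllableProd, zpow_add, mul_assoc]
      rw [hprod]
      by_cases hef : e + f = 0
      · refine ⟨S, ⟨fun a ha => hexp a (List.mem_cons_of_mem _ ha), hchain.tail⟩, by simp [hef]⟩
      · refine ⟨(x, e + f) :: S, ⟨?_, ?_⟩, by simp [syllableProd]⟩
        · simpa [hef] using fun a ha => hexp a (List.mem_cons_of_mem _ ha)
        · cases S with
          | nil => exact .singleton _
          | cons b S => exact List.isChain_cons_cons.mpr (List.isChain_cons_cons.mp hchain)
    · refine ⟨(x, e) :: (y, f) :: S, ⟨?_, List.isChain_cons_cons.mpr ⟨hxy, hchain⟩⟩,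
        by simp [syllableProd]⟩
      simpa [he] using hexp

theorem exists_isReducedSyllables [DecidableEq α] (g : FreeGroup α) :
    ∃ S, IsReducedSyllables S ∧ syllableProd S = g := by
  suffices h : ∀ S, IsReducedSyllables S → ∃ T, IsReducedSyllables T ∧
      syllableProd T = g * syllableProd S by
    simpa [syllableProd] using h [] ⟨by simp, .nil⟩
  induction g using FreeGroup.induction_on with
  | C1 => exact fun S hS => ⟨S, hS, (one_mul _).symm⟩
  | of x => exact fun S hS => by simpa using hS.exists_zpow_mul x 1
  | inv_of x _ => exact fun S hS => by simpa using hS.exists_zpow_mul x (-1)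
  | mul g h hg hh =>
    intro S hS
    obtain ⟨T, hT, hTS⟩ := hh S hS
    obtain ⟨U, hU, hUT⟩ := hg T hT
    exact ⟨U, hU, by rw [hUT, hTS, mul_assoc]⟩

variable [DecidableEq α] (R : Type*) [CommRing R] (S : List (α × ℤ))

local notation "Mat" => Matrix (Fin (S.length + 1)) (Fin (S.length + 1)) R

def syllableShift (x : α) : Mat :=
  Matrix.of fun i j => if (j : ℕ) = i + 1 ∧ (S[(i : ℕ)]?).map Prod.fst = some x then 1 else 0

variable {R S}

theorem syllableShift_apply_eq_zero (x : α) {i j : Fin (S.length + 1)} (hij : (j : ℕ) ≠ i + 1) :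
    syllableShift R S x i j = 0 := by
  simp [syllableShift, hij]

theorem vanishesBelowSuperdiag_syllableShift (x : α) :
    (syllableShift R S x).VanishesBelowSuperdiag 1 :=
  fun _ _ hij => syllableShift_apply_eq_zero x (by omega)

theorem syllableShift_mul_self (hS : S.IsChain fun a b => a.1 ≠ b.1) (x : α) :
    syllableShift R S x * syllableShift R S x = 0 := by
  ext i j
  rw [Matrix.mul_apply]
  refine Finset.sum_eq_zero fun t _ => ?_
  simp only [syllableShift, Matrix.of_apply]
  split_ifs with ht hj
  · obtain ⟨hti, hi⟩ := ht
    obtain ⟨-, htx⟩ := hj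
    simp only [Option.map_eq_some_iff, List.getElem?_eq_some_iff] at hi htx
    obtain ⟨a, ⟨hilt, rfl⟩, rfl⟩ := hi
    obtain ⟨b, ⟨htlt, rfl⟩, hb⟩ := htx
    simp only [hti] at hb
    exact absurd hb.symm (List.isChain_iff_getElem.mp hS i (by omega))
  all_goals simp

theorem one_add_smul_syllableShift_mul (hS : S.IsChain fun a b => a.1 ≠ b.1) (x : α) (a b : R) :
    (1 + a • syllableShift R S x) * (1 + b • syllableShift R S x) =
      1 + (a + b) • syllableShift R S x := by
  simp only [add_mul, mul_add, one_mul, mul_one, smul_mul_smul_comm, syllableShift_mul_self hS,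
    smul_zero, add_zero, add_smul]
  abel

variable (hS : S.IsChain fun a b => a.1 ≠ b.1)

variable (R) in
def syllableUnit (x : α) : Matˣ where
  val := 1 + (1 : R) • syllableShift R S x
  inv := 1 + (-1 : R) • syllableShift R S x
  val_inv := by rw [one_add_smul_syllableShift_mul hS, add_neg_cancel, zero_smul, add_zero]
  inv_val := by rw [one_add_smul_syllableShift_mul hS, neg_add_cancel, zero_smul, add_zero]

theorem val_syllableUnit_zpow (x : α) (e : ℤ) :
    ((syllableUnit R hS x ^ e : Matˣ) : Mat) = 1 + (e : R) • syllableShift R S x := by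
  induction e using Int.induction_on with
  | zero => simp
  | succ e ih =>
    rw [zpow_add_one, Units.val_mul, ih]
    exact (one_add_smul_syllableShift_mul hS x _ _).trans (by push_cast; rfl)
  | pred e ih =>
    rw [zpow_sub_one, Units.val_mul, ih]
    exact (one_add_smul_syllableShift_mul hS x _ _).trans (by push_cast; ring_nf)

variable (R) in
def syllableRep : FreeGroup α →* Matˣ :=
  lift (syllableUnit R hS)

theorem val_syllableRep_of_zpow (x : α) (e : ℤ) :
    (syllableRep R hS (of x ^ e) : Mat) = 1 + (e : R) • syllableShift R S x := by
  rw [syllableRep, map_zpow, lift_apply_of, val_syllableUnit_zpow]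

theorem val_syllableRep_mem_unitriangular (g : FreeGroup α) :
    (syllableRep R hS g : Mat) ∈ Matrix.unitriangular _ R := by
  have hgen : ∀ (x : α) (e : ℤ),
      (syllableRep R hS (of x ^ e) : Mat) ∈ Matrix.unitriangular _ R := by
    intro x e
    rw [val_syllableRep_of_zpow, Matrix.mem_unitriangular, add_sub_cancel_left]
    exact (vanishesBelowSuperdiag_syllableShift x).smul _
  induction g using FreeGroup.induction_on with
  | C1 => exact (Matrix.unitriangular _ R).one_mem
  | of x => simpa using hgen x 1
  | inv_of x _ => simpa using hgen x (-1)
  | mul g h hg hh => simpa using (Matrix.unitriangular _ R).mul_mem hg hh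

theorem val_syllableRep_syllableProd :
    (syllableRep R hS (syllableProd S) : Mat) =
      (S.map fun a => 1 + (a.2 : R) • syllableShift R S a.1).prod := by
  rw [syllableProd, ← Units.coeHom_apply, map_list_prod, map_list_prod, List.map_map,
    List.map_map]
  exact congrArg List.prod (List.map_congr_left fun a _ => val_syllableRep_of_zpow hS a.1 a.2)

theorem val_syllableRep_syllableProd_apply_zero_last :
    (syllableRep R hS (syllableProd S) : Mat) 0 (Fin.last _) =
      (S.map fun a => (a.2 : R)).prod := by
  let f : α × ℤ → Mat := fun a => 1 + (a.2 : R) • syllableShift R S a.1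
  have hrange : S.map f = (List.range S.length).map fun t => ((S[t]?).map f).getD 1 := by
    refine List.ext_getElem (by simp) fun t h _ => ?_
    simp [List.getElem?_eq_getElem (by simpa using h)]
  let c : ℕ → R := fun t => ((S[t]?).map fun a => (a.2 : R)).getD 1
  have key := Matrix.prod_map_range_apply_zero (fun t => ((S[t]?).map f).getD 1) c ?_ ?_
    (Fin.last S.length)
  · rw [Fin.val_last] at key
    rw [val_syllableRep_syllableProd, hrange, key, Finset.prod_range, ← Fin.prod_univ_fun_getElem]
    simp [c]
  · intro t i j hij
    have hne : i ≠ j := by rintro rfl; omega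
    rcases S[t]? with _ | a
    · exact Matrix.one_apply_ne hne
    · simp [f, Matrix.one_apply_ne hne, syllableShift_apply_eq_zero _ (by omega : (j : ℕ) ≠ i + 1)]
  · rintro t i j rfl hj
    have hne : i ≠ j := by rintro rfl; omega
    simp [f, c, List.getElem?_eq_getElem (by omega : (i : ℕ) < S.length), syllableShift, hj,
      Matrix.one_apply_ne hne]

end FreeGroup

theorem FreeGroup.residuallyPFinite {p : ℕ} (hp : p.Prime) (α : Type*) :
    ResiduallyPFinite p (FreeGroup α) := by
  classical
  intro g hg
  obtain ⟨S, hS, rfl⟩ := exists_isReducedSyllables g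
  have hSne : S ≠ [] := by rintro rfl; exact hg rfl
  set c : ℤ := (S.map Prod.snd).prod
  have hc : c ≠ 0 := List.prod_ne_zero fun h0 => by
    obtain ⟨a, ha, ha0⟩ := List.mem_map.mp h0
    exact hS.1 a ha ha0
  set m := c.natAbs
  have hcm : (c : ZMod (p ^ m)) ≠ 0 := by
    rw [Ne, ZMod.intCast_zmod_eq_zero_iff_dvd]
    intro hdvd
    have := Nat.le_of_dvd (Int.natAbs_pos.mpr hc) (by simpa using Int.natAbs_dvd_natAbs.mpr hdvd)
    exact (Nat.lt_pow_self hp.one_lt).not_ge this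
  have : NeZero (p ^ m) := ⟨pow_ne_zero _ hp.ne_zero⟩
  let ρ := syllableRep (ZMod (p ^ m)) hS.2
  refine ⟨ρ.range, inferInstance, Fintype.ofFinite _, ρ.rangeRestrict, ?_, ?_⟩
  · rintro ⟨_, x, rfl⟩
    refine ⟨m + (S.length + 1), Subtype.ext (Units.ext ?_)⟩
    simpa using Matrix.pow_prime_pow_eq_one_of_mem_unitriangular hp (ZMod.natCast_self _)
      (val_syllableRep_mem_unitriangular hS.2 x)
  · intro h1
    have h1' : (ρ (syllableProd S)).val = 1 := by
      simpa using congrArg (fun u => (u : ρ.range).val.val) h1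
    have hentry := val_syllableRep_syllableProd_apply_zero_last (R := ZMod (p ^ m)) hS.2
    rw [h1', Matrix.one_apply_ne (by simpa [Fin.ext_iff, eq_comm] using hSne)] at hentry
    exact hcm (by simpa [c, Int.cast_list_prod, Function.comp_def] using hentry.symm)

theorem Subgroup.isPGroup_quotient_normalCore_map_ker {p : ℕ} [Fact p.Prime] {G : Type*} [Group G]
    {H : Subgroup G} [H.Normal] (hH : IsPGroup p (G ⧸ H)) {P : Type*} [Group P] [Finite P]
    (hP : IsPGroup p P) (φ : H →* P) :
    IsPGroup p (G ⧸ (φ.ker.map H.subtype).normalCore) := by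
  intro q
  induction q using QuotientGroup.induction_on with | _ g
  obtain ⟨k, hk⟩ := hH g
  obtain ⟨a, ha⟩ := hP.exists_card_eq
  have hgk : g ^ p ^ k ∈ H := by rwa [← QuotientGroup.eq_one_iff, QuotientGroup.mk_pow]
  refine ⟨k + a, ?_⟩
  rw [← QuotientGroup.mk_pow, QuotientGroup.eq_one_iff, pow_add, pow_mul]
  intro b
  let z : H := ⟨b * g ^ p ^ k * b⁻¹, ‹H.Normal›.conj_mem _ hgk b⟩
  refine ⟨z ^ p ^ a, ?_, by simp [z, conj_pow]⟩
  rw [SetLike.mem_coe, MonoidHom.mem_ker, map_pow, ← ha, pow_card_eq_one']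

namespace ResiduallyPFinite

variable {p : ℕ} {G : Type*} [Group G]

theorem of_exists_normal
    (h : ∀ g : G, g ≠ 1 →
      ∃ (N : Subgroup G) (_ : N.Normal), N.FiniteIndex ∧ IsPGroup p (G ⧸ N) ∧ g ∉ N) :
    ResiduallyPFinite p G := by
  intro g hg
  obtain ⟨N, hNormal, hFinite, hN, hgN⟩ := h g hg
  let e : Shrink.{0} (G ⧸ N) ≃* G ⧸ N := Shrink.mulEquiv
  refine ⟨Shrink.{0} (G ⧸ N), inferInstance, Fintype.ofFinite _,
    e.symm.toMonoidHom.comp (QuotientGroup.mk' N), hN.of_equiv e.symm, ?_⟩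
  simpa [QuotientGroup.eq_one_iff] using hgN

theorem of_injective {G' : Type*} [Group G'] (h : ResiduallyPFinite p G') (f : G →* G')
    (hf : Function.Injective f) : ResiduallyPFinite p G := by
  intro g hg
  obtain ⟨Q, hQg, hQf, φ, hQ, hφ⟩ := h (f g) ((map_ne_one_iff f hf).mpr hg)
  exact ⟨Q, hQg, hQf, φ.comp f, hQ, hφ⟩

theorem of_normal_of_index_eq_pow (hp : p.Prime) (H : Subgroup G) [H.Normal]
    (hH : ResiduallyPFinite p H) (hindex : ∃ n : ℕ, H.index = p ^ n) :
    ResiduallyPFinite p G := by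
  have : Fact p.Prime := ⟨hp⟩
  obtain ⟨n, hn⟩ := hindex
  have hquot : IsPGroup p (G ⧸ H) := IsPGroup.of_card hn
  have : H.FiniteIndex := ⟨by rw [hn]; exact pow_ne_zero n hp.ne_zero⟩
  refine of_exists_normal fun g hg => ?_
  obtain ⟨P, _, hPfin, φ, hP, hgφ⟩ : ∃ (P : Type) (_ : Group P) (_ : Finite P) (φ : H →* P),
      IsPGroup p P ∧ g ∉ φ.ker.map H.subtype := by
    by_cases hgH : g ∈ H
    · obtain ⟨P, hPg, hPf, φ, hP, hφ⟩ := hH ⟨g, hgH⟩ (by simpa using hg)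
      exact ⟨P, hPg, inferInstance, φ, hP, by rintro ⟨h, hh, rfl⟩; exact hφ hh⟩
    · exact ⟨PUnit, _, inferInstance, 1, .of_subsingleton p _,
        fun hg' => hgH (Subgroup.map_subtype_le _ hg')⟩
  have : (φ.ker.map H.subtype).FiniteIndex := by
    constructor
    rw [Subgroup.index_map_subtype]
    exact mul_ne_zero Subgroup.FiniteIndex.index_ne_zero Subgroup.FiniteIndex.index_ne_zero
  exact ⟨_, inferInstance, inferInstance, Subgroup.isPGroup_quotient_normalCore_map_ker hquot hP φ,
    fun hgN => hgφ (Subgroup.normalCore_le _ hgN)⟩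

end ResiduallyPFinite

theorem stmt11 (p : ℕ) (hp : p.Prime) (G : Type*) [Group G] (H : Subgroup G)
    [H.Normal] [IsFreeGroup H] (hindex : ∃ n : ℕ, H.index = p ^ n) :
    ResiduallyPFinite p G :=
  ResiduallyPFinite.of_normal_of_index_eq_pow hp H
    ((FreeGroup.residuallyPFinite hp _).of_injective (IsFreeGroup.toFreeGroup H).toMonoidHom
      (IsFreeGroup.toFreeGroup H).injective) hindex
end
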